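/- Let n_T, n_R ≥ 1, let k, d ∈ ℝ, and let θ_1,…,θ_{n_T}, φ_1,…,φ_{n_T} ∈ ℝ. Define H_{m,j} = (1/√(n_T n_R)) · exp(i·k·m·d·sin(θ_j)·sin(φ_j)) for m = 0,…,n_R−1, set W = H† H, and set γ_{ij} = sin(θ_j)·sin(φ_j) − sin(θ_i)·sin(φ_i). Then (n_R n_T)² · trace(W²) = n_R² n_T + n_R n_T (n_T − 1) + 4 · Σ_{1 ≤ j < i ≤ n_T} Σ_{s=1}^{n_R−1} (n_R − s) · cos(s·k·d·γ_{ij}). -/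

import Mathlib

/-!
Up to the factor `1 / (n_T n_R)`, the entry `W i j` is the array factor
`∑_{m < n_R} exp (i m y)` at `y = k d γ_{ij}`. Since `γ` is antisymmetric, `trace (W²)` is the
sum over all pairs `(i, j)` of `|∑_{m < n_R} exp (i m y)|² = ∑_{m, m'} exp (i (m - m') y)`, and
grouping the double sum by `s = m - m'` turns this into
`n_R + 2 ∑_{s=1}^{n_R-1} (n_R - s) cos (s y)`. This is even in `y` and equals `n_R²` at `y = 0`,
so the diagonal pairs contribute `n_T n_R²` and the off-diagonal pairs come in mirrored couples
`(i, j)`, `(j, i)`.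
-/

open Matrix Finset

section DoubleSums

variable {M : Type*} [AddCommMonoid M]

theorem sum_range_sum_range_sub_succ (f : ℤ → M) (n : ℕ) :
    ∑ m ∈ range (n + 1), ∑ m' ∈ range (n + 1), f (m - m') =
      ∑ m ∈ range n, ∑ m' ∈ range n, f (m - m') +
        (f 0 + ∑ s ∈ Ico 1 (n + 1), (f s + f (-s))) := by
  simp only [sum_range_succ', Nat.cast_add, Nat.cast_one, Nat.cast_zero,
    add_sub_add_right_eq_sub, sub_zero, zero_sub, sum_add_distrib, sum_Ico_eq_sum_range,
    add_tsub_cancel_right, add_comm 1]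
  abel

theorem sum_range_sum_range_sub (f : ℤ → M) (n : ℕ) :
    ∑ m ∈ range n, ∑ m' ∈ range n, f (m - m') =
      n • f 0 + ∑ s ∈ Ico 1 n, (n - s) • (f s + f (-s)) := by
  have hrows : ∑ m ∈ range n, ∑ m' ∈ range n, f (m - m') =
      ∑ t ∈ range n, (f 0 + ∑ s ∈ Ico 1 (t + 1), (f s + f (-s))) := by
    refine (sum_range_induction _ (fun n => ∑ m ∈ range n, ∑ m' ∈ range n, f (m - m')) ?_
      n fun t _ => sum_range_sum_range_sub_succ f t).symm
    simp
  rw [hrows, sum_add_distrib, sum_const, card_range,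
    sum_comm' (t' := Ico 1 n) (s' := fun s => Ico s n)]
  · simp only [sum_const, Nat.card_Ico]
  · intro t s
    simp only [mem_range, mem_Ico]
    omega

theorem sum_sum_eq_sum_add_two_nsmul_sum_lt {ι : Type*} [Fintype ι] [LinearOrder ι]
    (F : ι → ι → M) (hF : ∀ i j, F i j = F j i) :
    ∑ i, ∑ j, F i j = ∑ i, F i i + 2 • ∑ i, ∑ j ∈ univ.filter (· < i), F i j := by
  have hsplit (i : ι) : ∑ j, F i j =
      ∑ j ∈ univ.filter (· < i), F i j + (F i i + ∑ j ∈ univ.filter (i < ·), F i j) := by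
    rw [← sum_filter_add_sum_filter_not univ (· < i),
      show univ.filter (¬ · < i) = insert i (univ.filter (i < ·)) by
        ext; simp [le_iff_lt_or_eq, eq_comm, or_comm],
      sum_insert (by simp)]
  have hswap : ∑ i, ∑ j ∈ univ.filter (i < ·), F i j =
      ∑ i, ∑ j ∈ univ.filter (· < i), F i j := by
    rw [sum_comm' (t' := univ) (s' := fun j => univ.filter (· < j)) (by simp)]
    exact sum_congr rfl fun i _ => sum_congr rfl fun j _ => hF j i
  simp only [hsplit, sum_add_distrib, hswap]
  abel

end DoubleSums

noncomputable def arrayFactor (n : ℕ) (y : ℝ) : ℂ :=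
  ∑ m ∈ range n, Complex.exp (m * y * Complex.I)

/-- `n` times the Fejér kernel of order `n`. -/
noncomputable def fejerSum (n : ℕ) (y : ℝ) : ℝ :=
  n + 2 * ∑ s ∈ Icc 1 (n - 1), ((n : ℝ) - s) * Real.cos (s * y)

theorem fejerSum_neg (n : ℕ) (y : ℝ) : fejerSum n (-y) = fejerSum n y := by
  simp only [fejerSum, mul_neg, Real.cos_neg]

theorem arrayFactor_mul_arrayFactor_neg (n : ℕ) (y : ℝ) :
    arrayFactor n y * arrayFactor n (-y) = fejerSum n y := by
  have hexp (m m' : ℕ) :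
      Complex.exp (m * y * Complex.I) * Complex.exp (m' * ↑(-y) * Complex.I) =
        Complex.exp (((m - m' : ℤ) : ℂ) * y * Complex.I) := by
    rw [← Complex.exp_add]; push_cast; ring_nf
  have hIcc : Icc 1 (n - 1) = Ico 1 n := by ext; simp only [mem_Icc, mem_Ico]; omega
  simp only [arrayFactor, sum_mul_sum, hexp]
  rw [sum_range_sum_range_sub (fun t : ℤ => Complex.exp (t * y * Complex.I)), fejerSum, hIcc]
  push_cast
  simp only [zero_mul, Complex.exp_zero, nsmul_eq_mul, mul_one, neg_mul, mul_sum]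
  congr 1
  refine sum_congr rfl fun s hs => ?_
  rw [mem_Ico] at hs
  rw [Nat.cast_sub (by omega), ← neg_mul, ← Complex.two_cos]
  ring

theorem fejerSum_zero (n : ℕ) : fejerSum n 0 = n ^ 2 := by
  have h := arrayFactor_mul_arrayFactor_neg n 0
  simp only [arrayFactor, neg_zero, Complex.ofReal_zero, mul_zero, zero_mul, Complex.exp_zero,
    sum_const, card_range, nsmul_one] at h
  rw [sq]
  exact_mod_cast h.symm

theorem conjTranspose_mul_self_apply_eq_arrayFactor {ι : Type*} {n : ℕ} (c : ℝ)
    (u : ι → ℝ) (H : Matrix (Fin n) ι ℂ)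
    (hH : ∀ m j, H m j = c * Complex.exp ((m : ℕ) * u j * Complex.I))
    (i j : ι) : (Hᴴ * H) i j = (c ^ 2 : ℝ) * arrayFactor n (u j - u i) := by
  rw [mul_apply, arrayFactor, mul_sum, ← Fin.sum_univ_eq_sum_range]
  refine sum_congr rfl fun m _ => ?_
  rw [conjTranspose_apply, hH, hH, star_mul', Complex.star_def, Complex.conj_ofReal,
    ← Complex.exp_conj, mul_mul_mul_comm, ← Complex.exp_add]
  simp only [map_mul, Complex.conj_natCast, Complex.conj_ofReal, Complex.conj_I]
  push_cast
  ring_nf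

theorem sum_sum_fejerSum_of_antisymm {ι : Type*} [Fintype ι] [LinearOrder ι] (n : ℕ)
    (y : ι → ι → ℝ) (hy : ∀ i j, y j i = -y i j) :
    ∑ i, ∑ j, fejerSum n (y i j) =
      (n : ℝ) ^ 2 * Fintype.card ι + n * Fintype.card ι * (Fintype.card ι - 1) +
        4 * ∑ i, ∑ j ∈ univ.filter (· < i),
          ∑ s ∈ Icc 1 (n - 1), ((n : ℝ) - s) * Real.cos (s * y i j) := by
  have hdiag (i : ι) : y i i = 0 := by linarith [hy i i]
  -- the same splitting for the constant `1` counts the pairs `j < i`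
  have hpairs :=
    sum_sum_eq_sum_add_two_nsmul_sum_lt (fun (_ _ : ι) => (1 : ℝ)) fun _ _ => rfl
  rw [sum_sum_eq_sum_add_two_nsmul_sum_lt _ fun i j => by rw [hy, fejerSum_neg]]
  simp only [hdiag, fejerSum_zero]
  simp only [fejerSum, sum_add_distrib, sum_const, card_univ, nsmul_eq_mul, ← mul_sum,
    mul_one] at hpairs ⊢
  rw [← sum_mul]
  push_cast at hpairs ⊢
  linear_combination (-(n : ℝ)) * hpairs

theorem trace_sq_of_satcom_W (nT nR : ℕ) (hT : 1 ≤ nT) (hR : 1 ≤ nR)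
    (k d : ℝ) (θ φ : Fin nT → ℝ)
    (H : Matrix (Fin nR) (Fin nT) ℂ)
    (hH : ∀ (m : Fin nR) (j : Fin nT),
      H m j = (1 / Real.sqrt (nT * nR) : ℝ) *
        Complex.exp (Complex.I * k * (m : ℕ) * d * Real.sin (θ j) * Real.sin (φ j)))
    (W : Matrix (Fin nT) (Fin nT) ℂ) (hW : W = Hᴴ * H)
    (γ : Fin nT → Fin nT → ℝ)
    (hγ : ∀ i j, γ i j = Real.sin (θ j) * Real.sin (φ j) - Real.sin (θ i) * Real.sin (φ i)) :
    (((nR : ℝ) * nT) ^ 2 : ℝ) * (W ^ 2).trace =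
      (((nR : ℝ) ^ 2 * nT + (nR : ℝ) * nT * ((nT : ℝ) - 1) +
        4 * ∑ i : Fin nT, ∑ j ∈ Finset.univ.filter (fun j : Fin nT => j < i),
          ∑ s ∈ Finset.Icc 1 (nR - 1), ((nR : ℝ) - s) * Real.cos (s * k * d * γ i j)) : ℝ) := by
  set c : ℝ := 1 / Real.sqrt (nT * nR)
  have hc : (nR * nT : ℝ) * c ^ 2 = 1 := by
    have hpos : (0 : ℝ) < nT * nR := by positivity
    rw [div_pow, Real.sq_sqrt hpos.le, one_pow, mul_comm (nR : ℝ)]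
    exact mul_one_div_cancel hpos.ne'
  have hWij (i j : Fin nT) : W i j = (c ^ 2 : ℝ) * arrayFactor nR (k * d * γ i j) := by
    rw [hW, conjTranspose_mul_self_apply_eq_arrayFactor c
      (fun j => k * d * (Real.sin (θ j) * Real.sin (φ j))) H
      (fun m j => by rw [hH]; push_cast; ring_nf), hγ]
    ring_nf
  have hy (i j : Fin nT) : k * d * γ j i = -(k * d * γ i j) := by rw [hγ, hγ]; ring
  calc (((nR : ℝ) * nT) ^ 2 : ℝ) * (W ^ 2).trace
      = ∑ i, ∑ j, (((nR * nT : ℝ) * c ^ 2) ^ 2 : ℝ) *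
          (arrayFactor nR (k * d * γ i j) * arrayFactor nR (k * d * γ j i)) := by
        simp only [sq W, trace, Matrix.diag, mul_apply, hWij, mul_sum]
        push_cast
        ring_nf
    _ = ((∑ i, ∑ j, fejerSum nR (k * d * γ i j) : ℝ) : ℂ) := by
        rw [hc, one_pow]
        push_cast
        refine sum_congr rfl fun i _ => sum_congr rfl fun j _ => ?_
        rw [one_mul, hy i j, arrayFactor_mul_arrayFactor_neg]
    _ = _ := by
        rw [sum_sum_fejerSum_of_antisymm nR _ hy, Fintype.card_fin]
        simp only [mul_assoc]
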